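/- arXiv:1204.6517 — 3 statements merged into one kernel-verified Lean document; each statement's English description precedes it below -/
import Mathlib

section
/- Let h = (s, p) be a rational Γ-inner function. Then h has a royal node on the unit circle if and only if h is full, i.e. the sup-norm of s over the closed unit disc equals 2. -/
/-!
By maximum modulus, `‖s‖` attains its supremum over the closed disc at some point of the
circle, where `‖s‖ ≤ 2` holds anyway. On the distinguished boundary `s = conj s · p` with
`‖p‖ = 1` gives `s² = ‖s‖² p`, so a boundary point is a royal node exactly when `‖s‖ = 2`
there.
-/

open Complex Metric Set MeasureTheory Filter ComplexConjugate

noncomputable section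

/-- A finite Blaschke product of degree `n`. -/
def IsBlaschkeOfDegree (f : ℂ → ℂ) (n : ℕ) : Prop :=
  ∃ (c : ℂ) (α : Fin n → ℂ), ‖c‖ = 1 ∧ (∀ j, ‖α j‖ < 1) ∧
    ∀ z : ℂ, f z = c * ∏ j, (z - α j) / (1 - conj (α j) * z)

/-- A finite Blaschke product (rational inner function). -/
def IsFiniteBlaschke (f : ℂ → ℂ) : Prop := ∃ n, IsBlaschkeOfDegree f n

/-- A Blaschke product of degree at most `n` (the class Bl_n). -/
def BlaschkeDegLE (f : ℂ → ℂ) (n : ℕ) : Prop := ∃ d ≤ n, IsBlaschkeOfDegree f d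

/-- The closed symmetrized bidisc. -/
def GammaSet : Set (ℂ × ℂ) := {x | ∃ z w : ℂ, ‖z‖ ≤ 1 ∧ ‖w‖ ≤ 1 ∧ x = (z + w, z * w)}

/-- A rational function with no poles in the closed unit disc. -/
def IsRationalDisc (f : ℂ → ℂ) : Prop :=
  ∃ P Q : Polynomial ℂ, (∀ z : ℂ, ‖z‖ ≤ 1 → Q.eval z ≠ 0) ∧
    ∀ z : ℂ, f z = P.eval z / Q.eval z

/-- A rational analytic map of the disc into Γ. -/
def IsRationalGammaMap (s p : ℂ → ℂ) : Prop :=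
  IsRationalDisc s ∧ IsRationalDisc p ∧ ∀ z : ℂ, ‖z‖ < 1 → (s z, p z) ∈ GammaSet

/-- A rational Γ-inner function: rational, maps 𝔻 into Γ, and boundary values on 𝕋
lie in the distinguished boundary bΓ. -/
def IsRationalGammaInner (s p : ℂ → ℂ) : Prop :=
  IsRationalGammaMap s p ∧
  ∀ lam : ℂ, ‖lam‖ = 1 → ‖p lam‖ = 1 ∧ ‖s lam‖ ≤ 2 ∧ s lam = conj (s lam) * p lam

/-- Membership in the class ℰ_{ν,k}: h = (s,p) is a rational map 𝔻 → Γ and there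
exists m ∈ Bl_ν with Φ∘(m,h) = (2mp − s)/(2 − ms) ∈ Bl_{k−1} (stated in
cleared-denominator form). -/
def MemE (ν k : ℕ) (s p : ℂ → ℂ) : Prop :=
  IsRationalGammaMap s p ∧
  ∃ m q : ℂ → ℂ, BlaschkeDegLE m ν ∧ BlaschkeDegLE q (k - 1) ∧
    ∀ z : ℂ, (2 - m z * s z) * q z = 2 * m z * p z - s z

/-- An inner function: analytic and bounded by 1 on 𝔻 with unimodular radial
boundary values a.e. on 𝕋. -/
def IsInner (f : ℂ → ℂ) : Prop :=
  DifferentiableOn ℂ f (ball (0:ℂ) 1) ∧ (∀ z ∈ ball (0:ℂ) 1, ‖f z‖ ≤ 1) ∧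
  ∀ᵐ θ : ℝ, ∃ b : ℂ, ‖b‖ = 1 ∧
    Tendsto (fun r : ℝ => f (r * Complex.exp (Complex.I * θ)))
      (nhdsWithin 1 (Set.Iio 1)) (nhds b)

/-- A Γ-inner function: analytic map 𝔻 → Γ whose radial boundary values lie a.e.
in the distinguished boundary bΓ. -/
def IsGammaInnerAE (s p : ℂ → ℂ) : Prop :=
  DifferentiableOn ℂ s (ball (0:ℂ) 1) ∧ DifferentiableOn ℂ p (ball (0:ℂ) 1) ∧
  (∀ z ∈ ball (0:ℂ) 1, (s z, p z) ∈ GammaSet) ∧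
  ∀ᵐ θ : ℝ, ∃ sb pb : ℂ,
    Tendsto (fun r : ℝ => s (r * Complex.exp (Complex.I * θ)))
      (nhdsWithin 1 (Set.Iio 1)) (nhds sb) ∧
    Tendsto (fun r : ℝ => p (r * Complex.exp (Complex.I * θ)))
      (nhdsWithin 1 (Set.Iio 1)) (nhds pb) ∧
    ‖pb‖ = 1 ∧ ‖sb‖ ≤ 2 ∧ sb = conj sb * pb

theorem IsRationalDisc.differentiableAt {f : ℂ → ℂ} (hf : IsRationalDisc f) {z : ℂ}
    (hz : ‖z‖ ≤ 1) : DifferentiableAt ℂ f z := by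
  obtain ⟨P, Q, hQ, hPQ⟩ := hf
  rw [show f = fun w => P.eval w / Q.eval w from funext hPQ]
  exact P.differentiableAt.div Q.differentiableAt (hQ z hz)

theorem IsRationalDisc.diffContOnCl {f : ℂ → ℂ} (hf : IsRationalDisc f) :
    DiffContOnCl ℂ f (ball 0 1) :=
  DifferentiableOn.diffContOnCl fun _ hz =>
    (hf.differentiableAt (by simpa [closure_ball] using hz)).differentiableWithinAt

theorem norm_fst_le_two_of_mem_gammaSet {x : ℂ × ℂ} (hx : x ∈ GammaSet) : ‖x.1‖ ≤ 2 := by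
  obtain ⟨z, w, hz, hw, rfl⟩ := hx
  calc ‖z + w‖ ≤ ‖z‖ + ‖w‖ := norm_add_le z w
    _ ≤ 2 := by linarith

theorem IsRationalGammaInner.norm_le_two {s p : ℂ → ℂ} (h : IsRationalGammaInner s p) {z : ℂ}
    (hz : ‖z‖ ≤ 1) : ‖s z‖ ≤ 2 := by
  rcases hz.lt_or_eq with hz | hz
  · exact norm_fst_le_two_of_mem_gammaSet (h.1.2.2 z hz)
  · exact (h.2 z hz).2.1

theorem sq_eq_four_mul_iff_norm_eq_two {σ π : ℂ} (hπ : ‖π‖ = 1) (hσ : σ = conj σ * π) :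
    σ ^ 2 = 4 * π ↔ ‖σ‖ = 2 := by
  have hπ0 : π ≠ 0 := norm_ne_zero_iff.1 (by rw [hπ]; exact one_ne_zero)
  have key : σ ^ 2 = ((‖σ‖ ^ 2 : ℝ) : ℂ) * π := by
    calc σ ^ 2 = σ * (conj σ * π) := by rw [← hσ, sq]
      _ = ((‖σ‖ ^ 2 : ℝ) : ℂ) * π := by rw [← mul_assoc, mul_conj, normSq_eq_norm_sq]
  rw [key, mul_left_inj' hπ0]
  norm_cast
  rw [show (4 : ℝ) = 2 ^ 2 by norm_num, pow_left_inj₀ (norm_nonneg σ) zero_le_two two_ne_zero]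

theorem exists_mem_sphere_isMaxOn_norm {F : Type*} [NormedAddCommGroup F] [NormedSpace ℂ F]
    {f : ℂ → F} {c : ℂ} {r : ℝ} (hr : 0 < r) (hf : DiffContOnCl ℂ f (ball c r)) :
    ∃ w ∈ sphere c r, IsMaxOn (norm ∘ f) (closedBall c r) w ∧
      sSup ((fun z => ‖f z‖) '' closedBall c r) = ‖f w‖ := by
  obtain ⟨w, hw, hmax⟩ :=
    Complex.exists_mem_frontier_isMaxOn_norm isBounded_ball (nonempty_ball.2 hr) hf
  rw [frontier_ball c hr.ne'] at hw
  rw [closure_ball c hr.ne'] at hmax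
  refine ⟨w, hw, hmax, IsGreatest.csSup_eq ⟨mem_image_of_mem _ (sphere_subset_closedBall hw), ?_⟩⟩
  rintro _ ⟨z, hz, rfl⟩
  exact hmax hz

/-- A rational Γ-inner function h = (s,p) has a royal node on the
unit circle iff h is full, i.e. the sup-norm of s over the closed unit disc is 2. -/
theorem royal_node_on_circle_iff_full
    (s p : ℂ → ℂ) (h : IsRationalGammaInner s p) :
    (∃ lam : ℂ, ‖lam‖ = 1 ∧ s lam ^ 2 = 4 * p lam) ↔
      sSup ((fun z => ‖s z‖) '' closedBall (0:ℂ) 1) = 2 := by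
  have royal_iff (lam : ℂ) (hlam : ‖lam‖ = 1) : s lam ^ 2 = 4 * p lam ↔ ‖s lam‖ = 2 :=
    sq_eq_four_mul_iff_norm_eq_two (h.2 lam hlam).1 (h.2 lam hlam).2.2
  obtain ⟨w, hw, hmax, hsup⟩ := exists_mem_sphere_isMaxOn_norm one_pos h.1.1.diffContOnCl
  rw [mem_sphere_zero_iff_norm] at hw
  rw [hsup]
  constructor
  · rintro ⟨lam, hlam, hroyal⟩
    refine le_antisymm (h.norm_le_two hw.le) ?_
    rw [← (royal_iff lam hlam).1 hroyal]
    exact hmax (mem_closedBall_zero_iff.2 hlam.le)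
  · intro hw2
    exact ⟨w, hw, (royal_iff w hw).2 hw2⟩
end
end

section
/- Let h = (s, p) be an analytic map from 𝔻 to the closed symmetrized bidisc Γ, and suppose there exists an inner function m such that q := (2mp − s)/(2 − ms) is inner and mq is identically 1. Then h is constant, equal to (x\bar{ω}, \bar{ω}²) for some ω ∈ 𝕋 and x ∈ [−2, 2]; in particular h is Γ-inner. -/
open Complex Metric Set MeasureTheory Filter ComplexConjugate

noncomputable section

/-! Since `|m|, |q| ≤ 1` and `m q = 1`, `m(0)` is unimodular, so `m` is a unimodular constant `ω` by
the maximum modulus principle, and then `q = ω̄` and the defining relation of `q` force `p = ω̄²`.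
Thus `h` takes values in `Γ` with `|p| = 1`, i.e. in `bΓ`, which makes `ω s` real-valued; a
real-valued holomorphic function on the disc is constant by the open mapping theorem. -/

def bGamma : Set (ℂ × ℂ) := {x | ‖x.2‖ = 1 ∧ ‖x.1‖ ≤ 2 ∧ x.1 = conj x.1 * x.2}

lemma conj_mul_self_of_norm_eq_one {a : ℂ} (h : ‖a‖ = 1) : conj a * a = 1 := by
  rw [mul_comm, Complex.mul_conj', h]
  norm_num

lemma norm_eq_one_of_mul_eq_one {a b : ℂ} (ha : ‖a‖ ≤ 1) (hb : ‖b‖ ≤ 1) (hab : a * b = 1) :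
    ‖a‖ = 1 := by
  have h : ‖a‖ * ‖b‖ = 1 := by rw [← norm_mul, hab, norm_one]
  nlinarith [norm_nonneg a, norm_nonneg b]

lemma mem_bGamma_of_mem_gammaSet {x : ℂ × ℂ} (hx : x ∈ GammaSet) (hx₂ : ‖x.2‖ = 1) :
    x ∈ bGamma := by
  obtain ⟨z, w, hz, hw, rfl⟩ := hx
  have hzw : ‖z‖ * ‖w‖ = 1 := by rw [← norm_mul]; exact hx₂
  have hz₁ : ‖z‖ = 1 := le_antisymm hz (by nlinarith [mul_le_mul_of_nonneg_left hw (norm_nonneg z)])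
  have hw₁ : ‖w‖ = 1 := le_antisymm hw (by nlinarith [mul_le_mul_of_nonneg_right hz (norm_nonneg w)])
  refine ⟨hx₂, (norm_add_le z w).trans (by rw [hz₁, hw₁]; norm_num), ?_⟩
  have hcz := conj_mul_self_of_norm_eq_one hz₁
  have hcw := conj_mul_self_of_norm_eq_one hw₁
  simp only [map_add]
  linear_combination (-w) * hcz + (-z) * hcw

lemma im_mul_eq_zero_of_mk_conj_sq_mem_bGamma {s ω : ℂ} (hω : ‖ω‖ = 1)
    (hs : (s, conj ω ^ 2) ∈ bGamma) : (s * ω).im = 0 := by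
  rw [← Complex.conj_eq_iff_im, map_mul]
  linear_combination (-ω) * hs.2.2 + (-(conj s * conj ω)) * conj_mul_self_of_norm_eq_one hω

lemma mk_mul_conj_mem_bGamma {ω : ℂ} (hω : ‖ω‖ = 1) {x : ℝ} (hx : |x| ≤ 2) :
    ((x : ℂ) * conj ω, conj ω ^ 2) ∈ bGamma := by
  refine ⟨by simp [hω], by simpa [hω] using hx, ?_⟩
  simp only [map_mul, Complex.conj_conj, Complex.conj_ofReal]
  linear_combination (-(x : ℂ) * conj ω) * conj_mul_self_of_norm_eq_one hω

/-- In `Φ(m, s, p) = (2mp − s)/(2 − ms)`, a unimodular `m` with `m Φ = 1` forces `p = m̄²`. -/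
lemma eq_conj_sq_of_mul_eq_one {ω s p q : ℂ} (hω : ‖ω‖ = 1) (hωq : ω * q = 1)
    (hq : (2 - ω * s) * q = 2 * ω * p - s) : p = conj ω ^ 2 := by
  have hωc : ω * conj ω = 1 := by rw [mul_comm]; exact conj_mul_self_of_norm_eq_one hω
  have hω₀ : ω ≠ 0 := norm_ne_zero_iff.1 (by rw [hω]; exact one_ne_zero)
  have hq_eq : q = conj ω := mul_left_cancel₀ hω₀ (hωq.trans hωc.symm)
  subst hq_eq
  have h : conj ω = ω * p := by linear_combination hq / 2 + (s / 2) * hωc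
  linear_combination (-(conj ω)) * h + (-p) * hωc

lemma eqOn_of_norm_le_one_of_norm_eq_one {f : ℂ → ℂ} {U : Set ℂ} {c : ℂ}
    (hf : DifferentiableOn ℂ f U) (hU : IsOpen U) (hUc : IsPreconnected U) (hcU : c ∈ U)
    (hle : ∀ z ∈ U, ‖f z‖ ≤ 1) (hfc : ‖f c‖ = 1) : ∀ z ∈ U, f z = f c := fun _ hz =>
  Complex.eqOn_of_isPreconnected_of_isMaxOn_norm hUc hU hf hcU
    (fun w hw => (hle w hw).trans hfc.ge) hz

lemma DifferentiableOn.exists_eq_ofReal_of_im_eq_zero {f : ℂ → ℂ} {U : Set ℂ}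
    (hf : DifferentiableOn ℂ f U) (hU : IsOpen U) (hUc : IsPreconnected U)
    (him : ∀ z ∈ U, (f z).im = 0) : ∃ x : ℝ, ∀ z ∈ U, f z = x := by
  rcases (hf.analyticOnNhd hU).is_constant_or_isOpen hUc with ⟨w, hw⟩ | hopen
  · refine ⟨w.re, fun z hz => ?_⟩
    rw [hw z hz]
    exact Complex.ext rfl (by simp [← hw z hz, him z hz])
  · have hsub : f '' U ⊆ interior (Complex.im ⁻¹' {0}) :=
      interior_maximal (by rintro _ ⟨z, hz, rfl⟩; exact him z hz) (hopen U subset_rfl hU)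
    rw [Complex.interior_preimage_im, interior_singleton, preimage_empty, subset_empty_iff,
      image_eq_empty] at hsub
    exact ⟨0, by simp [hsub]⟩

lemma tendsto_radial_of_eqOn_ball {f : ℂ → ℂ} {c : ℂ} (hf : ∀ z ∈ ball (0 : ℂ) 1, f z = c)
    (θ : ℝ) : Tendsto (fun r : ℝ => f (r * Complex.exp (Complex.I * θ)))
      (nhdsWithin 1 (Set.Iio 1)) (nhds c) := by
  refine tendsto_const_nhds.congr' ?_
  filter_upwards [Ioo_mem_nhdsLT (zero_lt_one' ℝ)] with r hr
  refine (hf _ ?_).symm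
  rw [mem_ball_zero_iff, norm_mul, Complex.norm_exp, Complex.norm_real, Real.norm_eq_abs]
  simp [abs_of_pos hr.1, hr.2]

lemma isGammaInnerAE_of_eqOn_ball {s p : ℂ → ℂ} {x : ℂ × ℂ}
    (hmaps : ∀ z ∈ ball (0 : ℂ) 1, (s z, p z) ∈ GammaSet)
    (hs : ∀ z ∈ ball (0 : ℂ) 1, s z = x.1) (hp : ∀ z ∈ ball (0 : ℂ) 1, p z = x.2)
    (hx : x ∈ bGamma) : IsGammaInnerAE s p :=
  ⟨(differentiableOn_const _).congr hs, (differentiableOn_const _).congr hp, hmaps,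
    .of_forall fun θ => ⟨x.1, x.2, tendsto_radial_of_eqOn_ball hs θ,
      tendsto_radial_of_eqOn_ball hp θ, hx⟩⟩

theorem constant_case_mq_eq_one_general
    (s p m q : ℂ → ℂ)
    (hs : DifferentiableOn ℂ s (ball (0:ℂ) 1))
    (hmaps : ∀ z ∈ ball (0:ℂ) 1, (s z, p z) ∈ GammaSet)
    (hm : IsInner m) (hq : IsInner q)
    (hqdef : ∀ z ∈ ball (0:ℂ) 1, (2 - m z * s z) * q z = 2 * m z * p z - s z)
    (hmq : ∀ z ∈ ball (0:ℂ) 1, m z * q z = 1) :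
    (∃ (ω : ℂ) (x : ℝ), ‖ω‖ = 1 ∧ x ∈ Set.Icc (-2:ℝ) 2 ∧
      ∀ z ∈ ball (0:ℂ) 1, s z = (x : ℂ) * conj ω ∧ p z = (conj ω) ^ 2) ∧
    IsGammaInnerAE s p := by
  have h0 : (0 : ℂ) ∈ ball (0 : ℂ) 1 := mem_ball_self one_pos
  set ω := m 0
  have hω : ‖ω‖ = 1 := norm_eq_one_of_mul_eq_one (hm.2.1 0 h0) (hq.2.1 0 h0) (hmq 0 h0)
  have hmω : ∀ z ∈ ball (0 : ℂ) 1, m z = ω := eqOn_of_norm_le_one_of_norm_eq_one hm.1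
    isOpen_ball (convex_ball 0 1).isPreconnected h0 hm.2.1 hω
  have hpω : ∀ z ∈ ball (0 : ℂ) 1, p z = conj ω ^ 2 := fun z hz =>
    eq_conj_sq_of_mul_eq_one hω (hmω z hz ▸ hmq z hz) (hmω z hz ▸ hqdef z hz)
  have hbΓ : ∀ z ∈ ball (0 : ℂ) 1, (s z, conj ω ^ 2) ∈ bGamma := fun z hz =>
    hpω z hz ▸ mem_bGamma_of_mem_gammaSet (hmaps z hz) (by simp [hpω z hz, hω])
  obtain ⟨x, hx⟩ := (hs.mul_const ω).exists_eq_ofReal_of_im_eq_zero isOpen_ball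
    (convex_ball 0 1).isPreconnected fun z hz =>
      im_mul_eq_zero_of_mk_conj_sq_mem_bGamma hω (hbΓ z hz)
  have hsx : ∀ z ∈ ball (0 : ℂ) 1, s z = x * conj ω := fun z hz => by
    linear_combination conj ω * hx z hz - s z * conj_mul_self_of_norm_eq_one hω
  have hx₂ : |x| ≤ 2 := by
    simpa [hsx 0 h0, hω] using (hbΓ 0 h0).2.1
  exact ⟨⟨ω, x, hω, abs_le.1 hx₂, fun z hz => ⟨hsx z hz, hpω z hz⟩⟩,
    isGammaInnerAE_of_eqOn_ball hmaps hsx hpω (mk_mul_conj_mem_bGamma hω hx₂)⟩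

/-- Let h = (s,p) be analytic from 𝔻 into Γ and suppose there is
an inner function m such that q = (2mp − s)/(2 − ms) is inner and mq ≡ 1 on 𝔻.
Then h is constant, equal to (x·conj(ω), conj(ω)²) for some ω ∈ 𝕋 and
x ∈ [−2,2]; in particular h is Γ-inner. -/
theorem constant_case_mq_eq_one
    (s p m q : ℂ → ℂ)
    (hs : DifferentiableOn ℂ s (ball (0:ℂ) 1))
    (hp : DifferentiableOn ℂ p (ball (0:ℂ) 1))
    (hmaps : ∀ z ∈ ball (0:ℂ) 1, (s z, p z) ∈ GammaSet)
    (hm : IsInner m) (hq : IsInner q)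
    (hqdef : ∀ z ∈ ball (0:ℂ) 1, (2 - m z * s z) * q z = 2 * m z * p z - s z)
    (hmq : ∀ z ∈ ball (0:ℂ) 1, m z * q z = 1) :
    (∃ (ω : ℂ) (x : ℝ), ‖ω‖ = 1 ∧ x ∈ Set.Icc (-2:ℝ) 2 ∧
      ∀ z ∈ ball (0:ℂ) 1, s z = (x : ℂ) * conj ω ∧ p z = (conj ω) ^ 2) ∧
    IsGammaInnerAE s p :=
  constant_case_mq_eq_one_general s p m q hs hmaps hm hq hqdef hmq
end
end

section
/- Let ψ be a rational inner function on 𝔻 of degree d(ψ) ≥ 1 and define h_ψ(λ) = (λ + λψ(λ), λ²ψ(λ)). Then the royal nodes of h_ψ on 𝕋 are exactly the d(ψ) solutions on 𝕋 of ψ(λ) = 1, and at each such royal node ω_j, ½\overline{s_ψ(ω_j)} = \overline{ω_j}. -/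
open Complex Metric Set MeasureTheory Filter ComplexConjugate

noncomputable section

/-! The royal-node equation `(λ + λψ)² = 4λ²ψ` is `λ²(1 - ψ)² = 0`, so on the circle the royal
nodes are the solutions of `ψ = 1`. Writing `ψ = P / Q` with `P = c ∏ (z - αⱼ)` and
`Q = ∏ (1 - conj αⱼ z)`, these are exactly the roots of `P - Q`: off the circle `|P| ≠ |Q|`,
factor by factor, because `|1 - conj α z|² - |z - α|² = (1 - |z|²)(1 - |α|²)`. The leading
coefficient `c - ∏ (-conj αⱼ)` of `P - Q` is nonzero, so it has degree `d`, and its roots are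
simple: at a root `z` we have `z (P - Q)'(z) = Q(z) ∑ (1 - |αⱼ|²) / |z - αⱼ|²`, with `Q(z) ≠ 0`. -/

lemma Finset.prod_lt_prod_of_nonneg_of_nonempty {ι R : Type*} [CommSemiring R] [PartialOrder R]
    [IsStrictOrderedRing R] {s : Finset ι} {f g : ι → R} (hf : ∀ i ∈ s, 0 ≤ f i)
    (hfg : ∀ i ∈ s, f i < g i) (hs : s.Nonempty) : ∏ i ∈ s, f i < ∏ i ∈ s, g i := by
  induction hs using Finset.Nonempty.cons_induction with
  | singleton i => simpa using hfg i (Finset.mem_singleton_self i)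
  | cons i s hi hs ih =>
    simp only [Finset.prod_cons, Finset.forall_mem_cons] at hf hfg ⊢
    exact mul_lt_mul'' hfg.1 (ih hf.2 hfg.2) hf.1 (Finset.prod_nonneg hf.2)

lemma sq_add_mul_eq_four_mul_sq_mul_iff {R : Type*} [CommRing R] [IsDomain R] {x w : R}
    (hx : x ≠ 0) : (x + x * w) ^ 2 = 4 * (x ^ 2 * w) ↔ w = 1 := by
  have hsq : (x + x * w) ^ 2 - 4 * (x ^ 2 * w) = (x * (w - 1)) ^ 2 := by ring
  rw [← sub_eq_zero, hsq, pow_eq_zero_iff two_ne_zero, mul_eq_zero, sub_eq_zero]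
  exact or_iff_right hx

namespace Polynomial

theorem eval_derivative_prod_eq_mul_sum_div {ι K : Type*} [Field K] [DecidableEq ι]
    (s : Finset ι) (f : ι → K[X]) {a : K} (h : ∀ i ∈ s, (f i).eval a ≠ 0) :
    (derivative (∏ i ∈ s, f i)).eval a
      = (∏ i ∈ s, f i).eval a * ∑ i ∈ s, (derivative (f i)).eval a / (f i).eval a := by
  rw [derivative_prod_finset, eval_finsetSum, Finset.mul_sum]
  refine Finset.sum_congr rfl fun i hi => ?_
  rw [eval_mul, eval_prod, eval_prod, ← Finset.mul_prod_erase s _ hi]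
  field_simp [h i hi]

theorem nodup_roots_of_eval_derivative_ne_zero {K : Type*} [Field K] {p : K[X]} (hp : p ≠ 0)
    (h : ∀ a, p.IsRoot a → (derivative p).eval a ≠ 0) : p.roots.Nodup := by
  classical
  rw [Multiset.nodup_iff_count_le_one]
  intro a
  rw [count_roots]
  by_contra! hlt
  obtain ⟨hroot, hderiv⟩ := (one_lt_rootMultiplicity_iff_isRoot hp).mp hlt
  exact h a hroot hderiv

end Polynomial

lemma normSq_one_sub_conj_mul_sub_normSq_sub (z α : ℂ) :
    normSq (1 - conj α * z) - normSq (z - α) = (1 - normSq z) * (1 - normSq α) := by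
  simp only [normSq_apply, mul_re, mul_im, sub_re, sub_im, one_re, one_im, conj_re, conj_im]
  ring

section BlaschkeFactor

variable {z α : ℂ}

lemma norm_sub_lt_norm_one_sub_conj_mul (hα : ‖α‖ < 1) (hz : ‖z‖ < 1) :
    ‖z - α‖ < ‖1 - conj α * z‖ := by
  have key := normSq_one_sub_conj_mul_sub_normSq_sub z α
  simp only [normSq_eq_norm_sq] at key
  have hpos : 0 < (1 - ‖z‖ ^ 2) * (1 - ‖α‖ ^ 2) := by
    apply mul_pos <;> nlinarith [norm_nonneg z, norm_nonneg α]
  exact lt_of_pow_lt_pow_left₀ 2 (norm_nonneg _) (by linarith)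

lemma norm_one_sub_conj_mul_lt_norm_sub (hα : ‖α‖ < 1) (hz : 1 < ‖z‖) :
    ‖1 - conj α * z‖ < ‖z - α‖ := by
  have key := normSq_one_sub_conj_mul_sub_normSq_sub z α
  simp only [normSq_eq_norm_sq] at key
  have hneg : (1 - ‖z‖ ^ 2) * (1 - ‖α‖ ^ 2) < 0 := by
    apply mul_neg_of_neg_of_pos <;> nlinarith [norm_nonneg z, norm_nonneg α]
  exact lt_of_pow_lt_pow_left₀ 2 (norm_nonneg _) (by linarith)

lemma one_sub_conj_mul_ne_zero (hα : ‖α‖ < 1) (hz : ‖z‖ ≤ 1) : 1 - conj α * z ≠ 0 := by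
  refine sub_ne_zero.mpr fun h => ?_
  have : ‖conj α * z‖ < 1 := by
    rw [norm_mul, RCLike.norm_conj]
    exact lt_of_le_of_lt (mul_le_of_le_one_right (norm_nonneg α) hz) hα
  simp [← h] at this

/-- `z` times the logarithmic derivative of `(z - α) / (1 - conj α * z)`; the point is that
`1 - conj α * z = z * conj (z - α)` on the unit circle. -/
lemma mul_one_div_sub_add_conj_div_one_sub_conj_mul (hz : ‖z‖ = 1) (hzα : z ≠ α) :
    z * (1 / (z - α) + conj α / (1 - conj α * z))
      = ((1 - normSq α) / normSq (z - α) : ℝ) := by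
  have hzz : z * conj z = 1 := by rw [mul_conj, normSq_eq_norm_sq, hz]; norm_num
  have hfac : 1 - conj α * z = z * conj (z - α) := by
    rw [map_sub]; linear_combination -hzz
  have hsub : z - α ≠ 0 := sub_ne_zero.mpr hzα
  have hsub' : conj (z - α) ≠ 0 := (map_ne_zero _).mpr hsub
  have hz0 : z ≠ 0 := by rintro rfl; simp at hz
  rw [hfac, ofReal_div, ofReal_sub, ofReal_one, ← mul_conj, ← mul_conj]
  field_simp
  simp only [map_sub]
  linear_combination hzz

end BlaschkeFactor

section BlaschkePolynomials

open Polynomial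

variable {ι : Type*} [Fintype ι] (c : ℂ) (α : ι → ℂ)

def blaschkeNumerator : ℂ[X] := C c * ∏ j, (X - C (α j))

def blaschkeDenominator : ℂ[X] := ∏ j, (1 - C (conj (α j)) * X)

variable {c α}

@[simp]
lemma eval_blaschkeNumerator (z : ℂ) :
    (blaschkeNumerator c α).eval z = c * ∏ j, (z - α j) := by
  simp [blaschkeNumerator, eval_prod]

@[simp]
lemma eval_blaschkeDenominator (z : ℂ) :
    (blaschkeDenominator α).eval z = ∏ j, (1 - conj (α j) * z) := by
  simp [blaschkeDenominator, eval_prod]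

lemma blaschke_eq_eval_div_eval (z : ℂ) :
    c * ∏ j, (z - α j) / (1 - conj (α j) * z)
      = (blaschkeNumerator c α).eval z / (blaschkeDenominator α).eval z := by
  rw [eval_blaschkeNumerator, eval_blaschkeDenominator, Finset.prod_div_distrib, mul_div_assoc]

lemma eval_blaschkeDenominator_ne_zero (hα : ∀ j, ‖α j‖ < 1) {z : ℂ} (hz : ‖z‖ ≤ 1) :
    (blaschkeDenominator α).eval z ≠ 0 := by
  simpa [Finset.prod_ne_zero_iff] using fun j => one_sub_conj_mul_ne_zero (hα j) hz

lemma norm_eq_one_of_eval_blaschkeNumerator_eq [Nonempty ι] (hc : ‖c‖ = 1)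
    (hα : ∀ j, ‖α j‖ < 1) {z : ℂ}
    (h : (blaschkeNumerator c α).eval z = (blaschkeDenominator α).eval z) : ‖z‖ = 1 := by
  have hnorm : ∏ j, ‖z - α j‖ = ∏ j, ‖1 - conj (α j) * z‖ := by
    simpa [norm_prod, hc] using congrArg norm h
  rcases lt_trichotomy ‖z‖ 1 with hz | hz | hz
  · refine absurd hnorm (ne_of_lt ?_)
    exact Finset.prod_lt_prod_of_nonneg_of_nonempty (fun _ _ => norm_nonneg _)
      (fun j _ => norm_sub_lt_norm_one_sub_conj_mul (hα j) hz) Finset.univ_nonempty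
  · exact hz
  · refine absurd hnorm (ne_of_gt ?_)
    exact Finset.prod_lt_prod_of_nonneg_of_nonempty (fun _ _ => norm_nonneg _)
      (fun j _ => norm_one_sub_conj_mul_lt_norm_sub (hα j) hz) Finset.univ_nonempty

lemma eval_blaschkeNumerator_eq_iff [Nonempty ι] (hc : ‖c‖ = 1) (hα : ∀ j, ‖α j‖ < 1) (z : ℂ) :
    (blaschkeNumerator c α).eval z = (blaschkeDenominator α).eval z ↔
      ‖z‖ = 1 ∧ (blaschkeNumerator c α).eval z / (blaschkeDenominator α).eval z = 1 := by
  constructor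
  · intro h
    have hz := norm_eq_one_of_eval_blaschkeNumerator_eq hc hα h
    exact ⟨hz, (div_eq_one_iff_eq (eval_blaschkeDenominator_ne_zero hα hz.le)).mpr h⟩
  · rintro ⟨hz, h⟩
    exact (div_eq_one_iff_eq (eval_blaschkeDenominator_ne_zero hα hz.le)).mp h

lemma natDegree_blaschkeNumerator (hc : c ≠ 0) :
    (blaschkeNumerator c α).natDegree = Fintype.card ι := by
  rw [blaschkeNumerator, natDegree_C_mul hc, natDegree_prod_of_monic _ _ fun j _ => monic_X_sub_C _]
  simp

lemma coeff_blaschkeNumerator_card : (blaschkeNumerator c α).coeff (Fintype.card ι) = c := by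
  have hmonic : (∏ j, (X - C (α j))).Monic := monic_prod_of_monic _ _ fun j _ => monic_X_sub_C _
  have hdeg : (∏ j, (X - C (α j))).natDegree = Fintype.card ι := by
    rw [natDegree_prod_of_monic _ _ fun j _ => monic_X_sub_C _]; simp
  rw [blaschkeNumerator, coeff_C_mul, ← hdeg, hmonic.coeff_natDegree, mul_one]

lemma natDegree_one_sub_C_mul_X_le (β : ℂ) : (1 - C β * X).natDegree ≤ 1 :=
  (natDegree_sub_le _ _).trans (max_le (by simp) ((natDegree_C_mul_le _ _).trans natDegree_X_le))

lemma natDegree_blaschkeDenominator_le : (blaschkeDenominator α).natDegree ≤ Fintype.card ι := by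
  refine (natDegree_prod_le _ _).trans ?_
  simpa using Finset.sum_le_sum fun j (_ : j ∈ Finset.univ) =>
    natDegree_one_sub_C_mul_X_le (conj (α j))

lemma coeff_blaschkeDenominator_card :
    (blaschkeDenominator α).coeff (Fintype.card ι) = ∏ j, -conj (α j) := by
  simpa [blaschkeDenominator, coeff_one] using coeff_prod_of_natDegree_le (s := Finset.univ)
    (fun j => 1 - C (conj (α j)) * X) 1 fun j _ => natDegree_one_sub_C_mul_X_le _

lemma natDegree_blaschkeNumerator_sub_blaschkeDenominator [Nonempty ι] (hc : ‖c‖ = 1)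
    (hα : ∀ j, ‖α j‖ < 1) :
    (blaschkeNumerator c α - blaschkeDenominator α).natDegree = Fintype.card ι := by
  have hc0 : c ≠ 0 := norm_ne_zero_iff.mp (hc ▸ one_ne_zero)
  refine natDegree_eq_of_le_of_coeff_ne_zero ((natDegree_sub_le _ _).trans
    (max_le (natDegree_blaschkeNumerator hc0).le natDegree_blaschkeDenominator_le)) ?_
  rw [coeff_sub, coeff_blaschkeNumerator_card, coeff_blaschkeDenominator_card, sub_ne_zero]
  have hlt : ‖∏ j, -conj (α j)‖ < ‖c‖ := by
    simpa [norm_prod, hc] using Finset.prod_lt_prod_of_nonneg_of_nonempty (g := fun _ => 1)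
      (fun j _ => norm_nonneg (α j)) (fun j _ => hα j) Finset.univ_nonempty
  exact fun h => hlt.ne (congrArg norm h).symm

lemma eval_derivative_blaschkeNumerator {z : ℂ} (hz : ∀ j, z ≠ α j) :
    (derivative (blaschkeNumerator c α)).eval z
      = (blaschkeNumerator c α).eval z * ∑ j, 1 / (z - α j) := by
  classical
  rw [blaschkeNumerator, derivative_C_mul, eval_mul, eval_C,
    eval_derivative_prod_eq_mul_sum_div _ _ fun j _ => by simpa [sub_eq_zero] using hz j,
    eval_mul, eval_C, mul_assoc]
  simp

lemma eval_derivative_blaschkeDenominator {z : ℂ} (hz : ∀ j, 1 - conj (α j) * z ≠ 0) :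
    (derivative (blaschkeDenominator α)).eval z
      = (blaschkeDenominator α).eval z * ∑ j, -conj (α j) / (1 - conj (α j) * z) := by
  classical
  rw [blaschkeDenominator, eval_derivative_prod_eq_mul_sum_div _ _ fun j _ => by simpa using hz j]
  simp

lemma mul_eval_derivative_blaschkeNumerator_sub_blaschkeDenominator (hα : ∀ j, ‖α j‖ < 1)
    {z : ℂ} (hz : ‖z‖ = 1)
    (h : (blaschkeNumerator c α).eval z = (blaschkeDenominator α).eval z) :
    z * (derivative (blaschkeNumerator c α - blaschkeDenominator α)).eval z
      = (blaschkeDenominator α).eval z * (∑ j, (1 - normSq (α j)) / normSq (z - α j) : ℝ) := by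
  have hzα : ∀ j, z ≠ α j := fun j hj => (hα j).ne (hj ▸ hz)
  rw [derivative_sub, eval_sub, eval_derivative_blaschkeNumerator hzα,
    eval_derivative_blaschkeDenominator fun j => one_sub_conj_mul_ne_zero (hα j) hz.le, h,
    ← mul_sub, ← Finset.sum_sub_distrib, mul_left_comm, Finset.mul_sum, ofReal_sum]
  congr 1
  refine Finset.sum_congr rfl fun j _ => ?_
  rw [neg_div, sub_neg_eq_add, mul_one_div_sub_add_conj_div_one_sub_conj_mul hz (hzα j)]

lemma eval_derivative_blaschkeNumerator_sub_blaschkeDenominator_ne_zero [Nonempty ι]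
    (hα : ∀ j, ‖α j‖ < 1) {z : ℂ} (hz : ‖z‖ = 1)
    (h : (blaschkeNumerator c α).eval z = (blaschkeDenominator α).eval z) :
    (derivative (blaschkeNumerator c α - blaschkeDenominator α)).eval z ≠ 0 := by
  have hpos : 0 < ∑ j, (1 - normSq (α j)) / normSq (z - α j) := by
    refine Finset.sum_pos (fun j _ => div_pos ?_ ?_) Finset.univ_nonempty
    · rw [normSq_eq_norm_sq, sub_pos]
      exact pow_lt_one₀ (norm_nonneg _) (hα j) two_ne_zero
    · exact normSq_pos.mpr (sub_ne_zero.mpr fun hj => (hα j).ne (hj ▸ hz))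
  intro h0
  have := mul_eval_derivative_blaschkeNumerator_sub_blaschkeDenominator hα hz h
  rw [h0, mul_zero, eq_comm, mul_eq_zero, ofReal_eq_zero] at this
  exact this.elim (eval_blaschkeDenominator_ne_zero hα hz.le) hpos.ne'

theorem ncard_setOf_norm_eq_one_blaschke_eq_one [Nonempty ι] (hc : ‖c‖ = 1)
    (hα : ∀ j, ‖α j‖ < 1) :
    {z : ℂ | ‖z‖ = 1 ∧ c * ∏ j, (z - α j) / (1 - conj (α j) * z) = 1}.ncard
      = Fintype.card ι := by
  set R := blaschkeNumerator c α - blaschkeDenominator α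
  have hdeg : R.natDegree = Fintype.card ι :=
    natDegree_blaschkeNumerator_sub_blaschkeDenominator hc hα
  have hR : R ≠ 0 := fun h0 => Fintype.card_ne_zero (by rw [← hdeg, h0, natDegree_zero])
  have hroot : ∀ z, R.IsRoot z ↔ (blaschkeNumerator c α).eval z = (blaschkeDenominator α).eval z :=
    fun z => by rw [IsRoot, eval_sub, sub_eq_zero]
  have hset : {z : ℂ | ‖z‖ = 1 ∧ c * ∏ j, (z - α j) / (1 - conj (α j) * z) = 1}
      = R.roots.toFinset := by
    ext z
    rw [Finset.mem_coe, Multiset.mem_toFinset, mem_roots hR, hroot,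
      eval_blaschkeNumerator_eq_iff hc hα, Set.mem_ofPred_eq, blaschke_eq_eval_div_eval]
  have hnodup : R.roots.Nodup := nodup_roots_of_eval_derivative_ne_zero hR fun z hz =>
    have h := (hroot z).mp hz
    eval_derivative_blaschkeNumerator_sub_blaschkeDenominator_ne_zero hα
      (norm_eq_one_of_eval_blaschkeNumerator_eq hc hα h) h
  rw [hset, Set.ncard_coe_finset, Multiset.toFinset_card_of_nodup hnodup,
    IsAlgClosed.card_roots_eq_natDegree, hdeg]

end BlaschkePolynomials

/-- For a rational inner function ψ of degree d ≥ 1 and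
h_ψ(λ) = (λ + λψ(λ), λ²ψ(λ)), the royal nodes of h_ψ on 𝕋 are exactly the
points λ ∈ 𝕋 with ψ(λ) = 1, there are exactly d of them, and at each such royal
node ½·conj(s_ψ(λ)) = conj(λ). -/
theorem royal_nodes_of_h_psi
    (ψ : ℂ → ℂ) (d : ℕ) (hd : 1 ≤ d) (hψ : IsBlaschkeOfDegree ψ d) :
    (∀ lam : ℂ, ‖lam‖ = 1 →
      ((lam + lam * ψ lam) ^ 2 = 4 * (lam ^ 2 * ψ lam) ↔ ψ lam = 1)) ∧
    {lam : ℂ | ‖lam‖ = 1 ∧ ψ lam = 1}.ncard = d ∧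
    (∀ lam : ℂ, ‖lam‖ = 1 → ψ lam = 1 →
      (1/2) * conj (lam + lam * ψ lam) = conj lam) := by
  obtain ⟨c, α, hc, hα, hψ⟩ := hψ
  have : Nonempty (Fin d) := ⟨⟨0, hd⟩⟩
  refine ⟨fun lam hlam =>
    sq_add_mul_eq_four_mul_sq_mul_iff (norm_ne_zero_iff.mp (hlam ▸ one_ne_zero)), ?_,
    fun lam _ h => ?_⟩
  · simpa only [hψ, Fintype.card_fin] using ncard_setOf_norm_eq_one_blaschke_eq_one hc hα
  · rw [h, mul_one, ← two_mul, map_mul, map_ofNat, ← mul_assoc]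
    norm_num
end
end
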